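/- (Operator-norm growth of the projected derivative.) Let β > 0 and V(q) = 1 − cos q. For every integer K ≥ 1 and every φ ∈ L²(ν), ‖(Π_K^q φ)'‖_{L²(ν)} ≤ (K − 1 + β/2)·‖φ‖_{L²(ν)}; that is, the operator φ ↦ ∂_q Π_K^q φ on L²(ν) has operator norm at most K − 1 + β/2. -/

import Mathlib

open MeasureTheory Real
open scoped ContDiff ENNReal NNReal

/-- The normalization constant `Zν`. -/
noncomputable def Znu (β : ℝ) (V : ℝ → ℝ) : ℝ :=
  ∫ q in Set.Ioc (0:ℝ) (2*π), Real.exp (-(β * V q))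

/-- The marginal measure in position: `ν(dq) = Zν⁻¹ e^{-βV(q)} dq` on the torus,
realized as a measure on the fundamental domain `(0, 2π]`. -/
noncomputable def nuMeas (β : ℝ) (V : ℝ → ℝ) : Measure ℝ :=
  (ENNReal.ofReal (Znu β V)⁻¹) •
    ((volume.restrict (Set.Ioc (0:ℝ) (2*π))).withDensity
      fun q => ENNReal.ofReal (Real.exp (-(β * V q))))

/-- The weighted Fourier functions: `G₀ = (Zν/2π)^{1/2} e^{βV/2}`,
`G_{2k} = (Zν/π)^{1/2} cos(kq) e^{βV/2}`, `G_{2k-1} = (Zν/π)^{1/2} sin(kq) e^{βV/2}`. -/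
noncomputable def Gfun (β : ℝ) (V : ℝ → ℝ) (j : ℕ) (q : ℝ) : ℝ :=
  if j = 0 then Real.sqrt (Znu β V / (2*π)) * Real.exp (β * V q / 2)
  else if j % 2 = 0 then
    Real.sqrt (Znu β V / π) * Real.cos ((j/2 : ℕ) * q) * Real.exp (β * V q / 2)
  else Real.sqrt (Znu β V / π) * Real.sin (((j+1)/2 : ℕ) * q) * Real.exp (β * V q / 2)

/-- The orthogonal projection `Π_K^q` of `L²(ν)` onto `span{G₀, …, G_{2K-2}}`. -/
noncomputable def projq (β : ℝ) (V : ℝ → ℝ) (K : ℕ) (φ : ℝ → ℝ) (q : ℝ) : ℝ :=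
  ∑ j ∈ Finset.range (2*K - 1),
    (∫ q', φ q' * Gfun β V j q' ∂(nuMeas β V)) * Gfun β V j q

/-- The cosine potential `V(q) = 1 - cos q`. -/
noncomputable def Vcos : ℝ → ℝ := fun q => 1 - Real.cos q


lemma contIC (c : ℝ) : Continuous fun x : ℝ => Real.cos (c*x) :=
  Real.continuous_cos.comp (continuous_const.mul continuous_id)

lemma contIS (c : ℝ) : Continuous fun x : ℝ => Real.sin (c*x) :=
  Real.continuous_sin.comp (continuous_const.mul continuous_id)

lemma sin_two_pi_int (c : ℤ) : Real.sin ((c:ℝ)*(2*π)) = 0 := by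
  have := Real.sin_int_mul_pi (2*c)
  push_cast at this
  convert this using 2
  ring

lemma cos_two_pi_int (c : ℤ) : Real.cos ((c:ℝ)*(2*π)) = 1 := by
  have := Real.cos_int_mul_two_pi c
  push_cast at this
  convert this using 2

lemma int_cos_int (c : ℤ) :
    ∫ x in (0:ℝ)..(2*π), Real.cos ((c:ℝ)*x) = if c = 0 then 2*π else 0 := by
  rcases eq_or_ne c 0 with h | h
  · simp [h, two_mul, pi_nonneg]
  · rw [if_neg h]
    have h0 : (c:ℝ) ≠ 0 := Int.cast_ne_zero.mpr h
    have hd : ∀ x ∈ Set.uIcc (0:ℝ) (2*π),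
        HasDerivAt (fun y => Real.sin ((c:ℝ)*y) / c) (Real.cos ((c:ℝ)*x)) x := by
      intro x _
      have h1 : HasDerivAt (fun y : ℝ => (c:ℝ)*y) (c:ℝ) x := by
        simpa using (hasDerivAt_id x).const_mul (c:ℝ)
      have := h1.sin.div_const (c:ℝ)
      simpa [mul_div_cancel_right₀ _ h0] using this
    rw [intervalIntegral.integral_eq_sub_of_hasDerivAt hd ((contIC c).intervalIntegrable _ _)]
    simp [sin_two_pi_int c]

lemma int_sin_int (c : ℤ) :
    ∫ x in (0:ℝ)..(2*π), Real.sin ((c:ℝ)*x) = 0 := by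
  rcases eq_or_ne c 0 with h | h
  · simp [h]
  · have h0 : (c:ℝ) ≠ 0 := Int.cast_ne_zero.mpr h
    have hd : ∀ x ∈ Set.uIcc (0:ℝ) (2*π),
        HasDerivAt (fun y => -Real.cos ((c:ℝ)*y) / c) (Real.sin ((c:ℝ)*x)) x := by
      intro x _
      have h1 : HasDerivAt (fun y : ℝ => (c:ℝ)*y) (c:ℝ) x := by
        simpa using (hasDerivAt_id x).const_mul (c:ℝ)
      have := (h1.cos.fun_neg).div_const (c:ℝ)
      exact this.congr_deriv (by field_simp)
    rw [intervalIntegral.integral_eq_sub_of_hasDerivAt hd ((contIS c).intervalIntegrable _ _)]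
    simp [cos_two_pi_int c]

lemma int_cc (m n : ℕ) :
    ∫ x in (0:ℝ)..(2*π), Real.cos ((m:ℝ)*x) * Real.cos ((n:ℝ)*x)
      = if m = n then (if m = 0 then 2*π else π) else 0 := by
  have hpt : ∀ x : ℝ, Real.cos ((m:ℝ)*x) * Real.cos ((n:ℝ)*x)
      = (Real.cos ((((m - n : ℤ)):ℝ)*x) + Real.cos ((((m + n : ℤ)):ℝ)*x)) / 2 := by
    intro x
    push_cast
    rw [sub_mul, add_mul, Real.cos_sub, Real.cos_add]
    ring
  rw [intervalIntegral.integral_congr (g := fun x =>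
      (Real.cos ((((m - n : ℤ)):ℝ)*x) + Real.cos ((((m + n : ℤ)):ℝ)*x)) / 2)
      (fun x _ => hpt x)]
  rw [intervalIntegral.integral_div, intervalIntegral.integral_add
      ((contIC _).intervalIntegrable _ _) ((contIC _).intervalIntegrable _ _),
      int_cos_int, int_cos_int]
  rcases eq_or_ne m n with h | h
  · subst h
    rcases eq_or_ne m 0 with h0 | h0
    · subst h0; norm_num
    · have : ¬((m:ℤ) + m = 0) := by omega
      simp [this, h0]
  · have h1 : ¬((m:ℤ) - n = 0) := by omega
    have h2 : ¬((m:ℤ) + n = 0) ∨ (m = 0 ∧ n = 0) := by omega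
    rcases h2 with h2 | ⟨rfl, rfl⟩
    · simp [h1, h2, h]
    · simp at h
  
lemma int_ss (m n : ℕ) :
    ∫ x in (0:ℝ)..(2*π), Real.sin ((m:ℝ)*x) * Real.sin ((n:ℝ)*x)
      = if m = n ∧ m ≠ 0 then π else 0 := by
  have hpt : ∀ x : ℝ, Real.sin ((m:ℝ)*x) * Real.sin ((n:ℝ)*x)
      = (Real.cos ((((m - n : ℤ)):ℝ)*x) - Real.cos ((((m + n : ℤ)):ℝ)*x)) / 2 := by
    intro x
    push_cast
    rw [sub_mul, add_mul, Real.cos_sub, Real.cos_add]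
    ring
  rw [intervalIntegral.integral_congr (g := fun x =>
      (Real.cos ((((m - n : ℤ)):ℝ)*x) - Real.cos ((((m + n : ℤ)):ℝ)*x)) / 2)
      (fun x _ => hpt x)]
  rw [intervalIntegral.integral_div, intervalIntegral.integral_sub
      ((contIC _).intervalIntegrable _ _) ((contIC _).intervalIntegrable _ _),
      int_cos_int, int_cos_int]
  rcases eq_or_ne m n with h | h
  · subst h
    rcases eq_or_ne m 0 with h0 | h0
    · subst h0; norm_num
    · have : ¬((m:ℤ) + m = 0) := by omega
      simp [this, h0]
  · have h1 : ¬((m:ℤ) - n = 0) := by omega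
    have h2 : ¬((m:ℤ) + n = 0) ∨ (m = 0 ∧ n = 0) := by omega
    rcases h2 with h2 | ⟨rfl, rfl⟩
    · simp [h1, h2, h]
    · simp at h

lemma int_sc (m n : ℕ) :
    ∫ x in (0:ℝ)..(2*π), Real.sin ((m:ℝ)*x) * Real.cos ((n:ℝ)*x) = 0 := by
  have hpt : ∀ x : ℝ, Real.sin ((m:ℝ)*x) * Real.cos ((n:ℝ)*x)
      = (Real.sin ((((m + n : ℤ)):ℝ)*x) + Real.sin ((((m - n : ℤ)):ℝ)*x)) / 2 := by
    intro x
    push_cast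
    rw [add_mul, sub_mul, Real.sin_add, Real.sin_sub]
    ring
  rw [intervalIntegral.integral_congr (g := fun x =>
      (Real.sin ((((m + n : ℤ)):ℝ)*x) + Real.sin ((((m - n : ℤ)):ℝ)*x)) / 2)
      (fun x _ => hpt x)]
  rw [intervalIntegral.integral_div, intervalIntegral.integral_add
      ((contIS _).intervalIntegrable _ _) ((contIS _).intervalIntegrable _ _),
      int_sin_int, int_sin_int]
  norm_num

lemma int_cs (m n : ℕ) :
    ∫ x in (0:ℝ)..(2*π), Real.cos ((m:ℝ)*x) * Real.sin ((n:ℝ)*x) = 0 := by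
  rw [intervalIntegral.integral_congr
      (g := fun x => Real.sin ((n:ℝ)*x) * Real.cos ((m:ℝ)*x)) (fun x _ => mul_comm _ _)]
  exact int_sc n m

def tk (j : ℕ) : ℕ := if j % 2 = 0 then j/2 else (j+1)/2

noncomputable def tfun (j : ℕ) (q : ℝ) : ℝ :=
  if j % 2 = 0 then Real.cos ((tk j : ℝ) * q) else Real.sin ((tk j : ℝ) * q)

noncomputable def dfun (j : ℕ) (q : ℝ) : ℝ :=
  if j % 2 = 0 then -(tk j : ℝ) * Real.sin ((tk j : ℝ) * q)
  else (tk j : ℝ) * Real.cos ((tk j : ℝ) * q)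

lemma cont_tfun (j : ℕ) : Continuous (tfun j) := by
  unfold tfun; split <;> [exact contIC _; exact contIS _]

lemma cont_dfun (j : ℕ) : Continuous (dfun j) := by
  unfold dfun
  split
  · exact continuous_const.mul (contIS _)
  · exact continuous_const.mul (contIC _)

lemma int_tt (j l : ℕ) :
    ∫ x in (0:ℝ)..(2*π), tfun j x * tfun l x
      = if j = l then (if j = 0 then 2*π else π) else 0 := by
  rcases Nat.mod_two_eq_zero_or_one j with hj | hj <;>
    rcases Nat.mod_two_eq_zero_or_one l with hl | hl <;>
    simp only [tfun, tk, hj, hl, if_pos, if_neg, reduceIte, Nat.one_ne_zero]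
  · rw [int_cc]
    rcases eq_or_ne j l with rfl | h
    · have h2 : (j/2 = 0) ↔ (j = 0) := by omega
      simp [h2]
    · have h2 : ¬ (j/2 = l/2) := by omega
      simp [h2, h]
  · rw [int_cs]
    have : j ≠ l := by omega
    simp [this]
  · rw [int_sc]
    have : j ≠ l := by omega
    simp [this]
  · rw [int_ss]
    rcases eq_or_ne j l with rfl | h
    · have h2 : (j+1)/2 ≠ 0 := by omega
      have h3 : j ≠ 0 := by omega
      simp [h2, h3]
    · have h2 : ¬ ((j+1)/2 = (l+1)/2) := by omega
      simp [h2, h]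

lemma int_dd (j l : ℕ) :
    ∫ x in (0:ℝ)..(2*π), dfun j x * dfun l x
      = if j = l then ((tk j : ℝ))^2 * π else 0 := by
  rcases Nat.mod_two_eq_zero_or_one j with hj | hj <;>
    rcases Nat.mod_two_eq_zero_or_one l with hl | hl <;>
    simp only [dfun, hj, hl, if_pos, if_neg, reduceIte, Nat.one_ne_zero]
  · have hpt : ∀ x : ℝ, (-(tk j : ℝ) * Real.sin ((tk j : ℝ)*x)) * (-(tk l : ℝ) * Real.sin ((tk l : ℝ)*x))
        = ((tk j : ℝ) * (tk l : ℝ)) * (Real.sin ((tk j : ℝ)*x) * Real.sin ((tk l : ℝ)*x)) := by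
      intro x; ring
    rw [intervalIntegral.integral_congr (fun x _ => hpt x),
        intervalIntegral.integral_const_mul, int_ss]
    rcases eq_or_ne j l with rfl | h
    · rcases eq_or_ne (tk j) 0 with h0 | h0
      · simp [h0]
      · simp [h0, sq]
    · have h2 : tk j ≠ tk l := by simp [tk, hj, hl]; omega
      simp [h2, h]
  · have hpt : ∀ x : ℝ, (-(tk j : ℝ) * Real.sin ((tk j : ℝ)*x)) * ((tk l : ℝ) * Real.cos ((tk l : ℝ)*x))
        = (-(tk j : ℝ) * (tk l : ℝ)) * (Real.sin ((tk j : ℝ)*x) * Real.cos ((tk l : ℝ)*x)) := by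
      intro x; ring
    rw [intervalIntegral.integral_congr (fun x _ => hpt x),
        intervalIntegral.integral_const_mul, int_sc]
    have : j ≠ l := by omega
    simp [this]
  · have hpt : ∀ x : ℝ, ((tk j : ℝ) * Real.cos ((tk j : ℝ)*x)) * (-(tk l : ℝ) * Real.sin ((tk l : ℝ)*x))
        = (-(tk l : ℝ) * (tk j : ℝ)) * (Real.cos ((tk j : ℝ)*x) * Real.sin ((tk l : ℝ)*x)) := by
      intro x; ring
    rw [intervalIntegral.integral_congr (fun x _ => hpt x),
        intervalIntegral.integral_const_mul, int_cs]
    have : j ≠ l := by omega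
    simp [this]
  · have hpt : ∀ x : ℝ, ((tk j : ℝ) * Real.cos ((tk j : ℝ)*x)) * ((tk l : ℝ) * Real.cos ((tk l : ℝ)*x))
        = ((tk j : ℝ) * (tk l : ℝ)) * (Real.cos ((tk j : ℝ)*x) * Real.cos ((tk l : ℝ)*x)) := by
      intro x; ring
    rw [intervalIntegral.integral_congr (fun x _ => hpt x),
        intervalIntegral.integral_const_mul, int_cc]
    rcases eq_or_ne j l with rfl | h
    · have h0 : tk j ≠ 0 := by simp [tk, hj]; omega
      simp [h0, sq]
    · have h2 : tk j ≠ tk l := by simp [tk, hj, hl]; omega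
      simp [h2, h]

lemma int_sum_sq (N : ℕ) (u : ℕ → ℝ) (F : ℕ → ℝ → ℝ) (e : ℕ → ℝ)
    (hF : ∀ j, Continuous (F j))
    (h : ∀ j l, ∫ x in (0:ℝ)..(2*π), F j x * F l x = if j = l then e j else 0) :
    ∫ x in (0:ℝ)..(2*π), (∑ j ∈ Finset.range N, u j * F j x)^2
      = ∑ j ∈ Finset.range N, (u j)^2 * e j := by
  have hpt : ∀ x : ℝ, (∑ j ∈ Finset.range N, u j * F j x)^2
      = ∑ j ∈ Finset.range N, ∑ l ∈ Finset.range N, (u j * u l) * (F j x * F l x) := by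
    intro x
    rw [sq, Finset.sum_mul_sum]
    refine Finset.sum_congr rfl fun j _ => Finset.sum_congr rfl fun l _ => by ring
  rw [intervalIntegral.integral_congr (fun x _ => hpt x),
      intervalIntegral.integral_finset_sum
        (f := fun j x => ∑ l ∈ Finset.range N, (u j * u l) * (F j x * F l x)) (fun j _ =>
        (continuous_finset_sum _ fun l _ =>
          continuous_const.mul ((hF j).mul (hF l))).intervalIntegrable _ _)]
  refine Finset.sum_congr rfl fun j hj => ?_
  rw [intervalIntegral.integral_finset_sum
      (f := fun l x => (u j * u l) * (F j x * F l x)) (fun l _ =>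
      (continuous_const.mul ((hF j).mul (hF l))).intervalIntegrable _ _)]
  rw [Finset.sum_eq_single j]
  · rw [intervalIntegral.integral_const_mul, h j j, if_pos rfl]; ring
  · intro l _ hne
    rw [intervalIntegral.integral_const_mul, h j l, if_neg (fun hh => hne hh.symm), mul_zero]
  · intro h'; exact absurd hj h'

noncomputable def Afac (β : ℝ) (j : ℕ) : ℝ :=
  if j = 0 then Real.sqrt (Znu β Vcos / (2*π)) else Real.sqrt (Znu β Vcos / π)

lemma Gfun_eq (β : ℝ) (j : ℕ) (q : ℝ) :
    Gfun β Vcos j q = Afac β j * tfun j q * Real.exp (β * Vcos q / 2) := by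
  rcases eq_or_ne j 0 with rfl | h0
  · simp [Gfun, Afac, tfun, tk]
  · rcases Nat.mod_two_eq_zero_or_one j with hj | hj
    · simp [Gfun, Afac, tfun, tk, h0, hj]
    · simp [Gfun, Afac, tfun, tk, h0, hj]

lemma cont_Vcos : Continuous Vcos := by
  unfold Vcos; exact continuous_const.sub Real.continuous_cos

lemma Vcos_nonneg (q : ℝ) : 0 ≤ Vcos q := by
  unfold Vcos; have := Real.cos_le_one q; linarith

lemma Vcos_le_two (q : ℝ) : Vcos q ≤ 2 := by
  unfold Vcos; have := Real.neg_one_le_cos q; linarith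

lemma Znu_pos (β : ℝ) : 0 < Znu β Vcos := by
  have h2π : (0:ℝ) < 2*π := by positivity
  rw [Znu, ← intervalIntegral.integral_of_le h2π.le]
  exact intervalIntegral.intervalIntegral_pos_of_pos_on
    ((Real.continuous_exp.comp (continuous_const.mul cont_Vcos).neg).intervalIntegrable _ _)
    (fun x _ => Real.exp_pos _) h2π

lemma integral_nu (β : ℝ) (g : ℝ → ℝ) :
    ∫ q, g q ∂(nuMeas β Vcos)
      = (Znu β Vcos)⁻¹ * ∫ x in (0:ℝ)..(2*π), g x * Real.exp (-(β * Vcos x)) := by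
  have h2π : (0:ℝ) ≤ 2*π := by positivity
  have hmeas : Measurable fun q : ℝ => Real.toNNReal (Real.exp (-(β * Vcos q))) :=
    (continuous_real_toNNReal.comp
      (Real.continuous_exp.comp (continuous_const.mul cont_Vcos).neg)).measurable
  rw [nuMeas, integral_smul_measure,
    ENNReal.toReal_ofReal (inv_nonneg.mpr (Znu_pos β).le)]
  have hd : (fun q : ℝ => ENNReal.ofReal (Real.exp (-(β * Vcos q))))
      = fun q : ℝ => ((Real.toNNReal (Real.exp (-(β * Vcos q))) : ℝ≥0) : ℝ≥0∞) := rfl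
  rw [hd, integral_withDensity_eq_integral_smul hmeas g, smul_eq_mul,
    intervalIntegral.integral_of_le h2π]
  congr 1
  refine integral_congr_ae (Filter.Eventually.of_forall fun q => ?_)
  simp only [NNReal.smul_def, Real.coe_toNNReal _ (Real.exp_nonneg _), smul_eq_mul]
  ring

lemma nu_finite (β : ℝ) (hβ : 0 < β) : IsFiniteMeasure (nuMeas β Vcos) := by
  constructor
  rw [nuMeas, Measure.smul_apply, smul_eq_mul]
  have h1 : ((volume.restrict (Set.Ioc (0:ℝ) (2*π))).withDensity
      fun q => ENNReal.ofReal (Real.exp (-(β * Vcos q)))) Set.univ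
      ≤ ENNReal.ofReal (2*π) := by
    rw [withDensity_apply _ MeasurableSet.univ, Measure.restrict_univ]
    calc ∫⁻ q, ENNReal.ofReal (Real.exp (-(β * Vcos q))) ∂(volume.restrict (Set.Ioc (0:ℝ) (2*π)))
        ≤ ∫⁻ _, 1 ∂(volume.restrict (Set.Ioc (0:ℝ) (2*π))) := by
          refine lintegral_mono fun q => ?_
          rw [show (1:ℝ≥0∞) = ENNReal.ofReal 1 by simp]
          refine ENNReal.ofReal_le_ofReal ?_
          rw [Real.exp_le_one_iff]
          have := Vcos_nonneg q
          nlinarith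
      _ = ENNReal.ofReal (2*π) := by
          rw [lintegral_one, Measure.restrict_apply MeasurableSet.univ, Set.univ_inter,
            Real.volume_Ioc]
          norm_num
  refine lt_of_le_of_lt (mul_le_mul_right h1 _) ?_
  exact ENNReal.mul_lt_top ENNReal.ofReal_lt_top ENNReal.ofReal_lt_top

lemma cont_efun (β : ℝ) : Continuous fun q : ℝ => Real.exp (β * Vcos q / 2) :=
  Real.continuous_exp.comp ((continuous_const.mul cont_Vcos).div_const 2)

lemma cont_Gfun (β : ℝ) (j : ℕ) : Continuous (Gfun β Vcos j) := by
  have : Gfun β Vcos j = fun q => Afac β j * tfun j q * Real.exp (β * Vcos q / 2) :=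
    funext (Gfun_eq β j)
  rw [this]
  exact (continuous_const.mul (cont_tfun j)).mul (cont_efun β)

lemma Gfun_bound (β : ℝ) (hβ : 0 < β) (j : ℕ) (q : ℝ) :
    |Gfun β Vcos j q| ≤ |Afac β j| * Real.exp β := by
  rw [Gfun_eq, abs_mul, abs_mul]
  have h1 : |tfun j q| ≤ 1 := by
    unfold tfun; split
    exacts [Real.abs_cos_le_one _, Real.abs_sin_le_one _]
  have h2 : |Real.exp (β * Vcos q / 2)| ≤ Real.exp β := by
    rw [abs_of_pos (Real.exp_pos _)]
    exact Real.exp_le_exp.mpr (by nlinarith [Vcos_le_two q, Vcos_nonneg q])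
  have := mul_le_mul (mul_le_mul_of_nonneg_left h1 (abs_nonneg (Afac β j))) h2
    (abs_nonneg _) (by positivity)
  simpa [mul_one] using this

lemma integrable_bdd_cont (β : ℝ) (hβ : 0 < β) {g : ℝ → ℝ} (hg : Continuous g)
    (C : ℝ) (hC : ∀ x, |g x| ≤ C) : Integrable g (nuMeas β Vcos) := by
  haveI := nu_finite β hβ
  exact (memLp_top_of_bound hg.aestronglyMeasurable C
    (Filter.Eventually.of_forall fun x => by simpa [Real.norm_eq_abs] using hC x)).integrable
    le_top

lemma integrable_Gmul (β : ℝ) (hβ : 0 < β) (j l : ℕ) :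
    Integrable (fun q => Gfun β Vcos j q * Gfun β Vcos l q) (nuMeas β Vcos) := by
  refine integrable_bdd_cont β hβ ((cont_Gfun β j).mul (cont_Gfun β l))
    ((|Afac β j| * Real.exp β) * (|Afac β l| * Real.exp β)) fun x => ?_
  rw [abs_mul]
  exact mul_le_mul (Gfun_bound β hβ j x) (Gfun_bound β hβ l x) (abs_nonneg _)
    (by positivity)

lemma integrable_phiG (β : ℝ) (hβ : 0 < β) {φ : ℝ → ℝ}
    (hφ : MemLp φ 2 (nuMeas β Vcos)) (j : ℕ) :
    Integrable (fun q => φ q * Gfun β Vcos j q) (nuMeas β Vcos) := by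
  haveI := nu_finite β hβ
  have hφint : Integrable φ (nuMeas β Vcos) := hφ.integrable one_le_two
  have := hφint.bdd_mul (cont_Gfun β j).aestronglyMeasurable
    (c := |Afac β j| * Real.exp β) (Filter.Eventually.of_forall fun x => by
      simpa [Real.norm_eq_abs] using Gfun_bound β hβ j x)
  exact this.congr (Filter.Eventually.of_forall fun x => mul_comm _ _)

lemma Gfun_mul_w (β : ℝ) (j l : ℕ) (q : ℝ) :
    Gfun β Vcos j q * Gfun β Vcos l q * Real.exp (-(β * Vcos q))
      = (Afac β j * Afac β l) * (tfun j q * tfun l q) := by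
  rw [Gfun_eq, Gfun_eq]
  have h : Real.exp (β * Vcos q / 2) * Real.exp (β * Vcos q / 2)
      * Real.exp (-(β * Vcos q)) = 1 := by
    rw [← Real.exp_add, ← Real.exp_add, ← Real.exp_zero]
    norm_num
  linear_combination (Afac β j * tfun j q * Afac β l * tfun l q) * h

lemma Gfun_ortho (β : ℝ) (j l : ℕ) :
    ∫ q, Gfun β Vcos j q * Gfun β Vcos l q ∂(nuMeas β Vcos)
      = if j = l then 1 else 0 := by
  have hZ := Znu_pos β
  have hπ := Real.pi_pos
  rw [integral_nu, intervalIntegral.integral_congr (fun q _ => Gfun_mul_w β j l q),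
    intervalIntegral.integral_const_mul, int_tt]
  rcases eq_or_ne j l with rfl | h
  · rw [if_pos rfl, if_pos rfl]
    rcases eq_or_ne j 0 with rfl | h0
    · have hA : Afac β 0 * Afac β 0 = Znu β Vcos / (2*π) := by
        rw [Afac, if_pos rfl]
        exact Real.mul_self_sqrt (by positivity)
      rw [hA]
      field_simp
      simp
    · rw [if_neg h0]
      have hA : Afac β j * Afac β j = Znu β Vcos / π := by
        rw [Afac, if_neg h0]
        exact Real.mul_self_sqrt (by positivity)
      rw [hA]
      field_simp
  · rw [if_neg h, if_neg h, mul_zero, mul_zero]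

lemma bessel (β : ℝ) (hβ : 0 < β) (N : ℕ) {φ : ℝ → ℝ}
    (hφ : MemLp φ 2 (nuMeas β Vcos)) :
    ∑ j ∈ Finset.range N, (∫ q, φ q * Gfun β Vcos j q ∂(nuMeas β Vcos))^2
      ≤ ∫ q, (φ q)^2 ∂(nuMeas β Vcos) := by
  haveI := nu_finite β hβ
  set ν := nuMeas β Vcos
  set c : ℕ → ℝ := fun j => ∫ q, φ q * Gfun β Vcos j q ∂ν with hc
  set f : ℝ → ℝ := fun q => ∑ j ∈ Finset.range N, c j * Gfun β Vcos j q with hf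
  have hGG := integrable_Gmul β hβ
  have hphiG := fun j => integrable_phiG β hβ hφ j
  have hint_f2 : Integrable (fun q => (f q)^2) ν := by
    have : (fun q => (f q)^2) = fun q => ∑ j ∈ Finset.range N, ∑ l ∈ Finset.range N,
        (c j * c l) * (Gfun β Vcos j q * Gfun β Vcos l q) := by
      funext q
      rw [hf]
      simp only
      rw [sq, Finset.sum_mul_sum]
      exact Finset.sum_congr rfl fun j _ => Finset.sum_congr rfl fun l _ => by ring
    rw [this]
    exact integrable_finset_sum _ fun j _ =>
      integrable_finset_sum _ fun l _ => (hGG j l).const_mul _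
  have hint_phif : Integrable (fun q => φ q * f q) ν := by
    have : (fun q => φ q * f q) = fun q => ∑ j ∈ Finset.range N,
        c j * (φ q * Gfun β Vcos j q) := by
      funext q
      rw [hf]
      simp only
      rw [Finset.mul_sum]
      exact Finset.sum_congr rfl fun j _ => by ring
    rw [this]
    exact integrable_finset_sum _ fun j _ => (hphiG j).const_mul _
  have hf2 : ∫ q, (f q)^2 ∂ν = ∑ j ∈ Finset.range N, (c j)^2 := by
    have : (fun q => (f q)^2) = fun q => ∑ j ∈ Finset.range N, ∑ l ∈ Finset.range N,
        (c j * c l) * (Gfun β Vcos j q * Gfun β Vcos l q) := by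
      funext q
      rw [hf]
      simp only
      rw [sq, Finset.sum_mul_sum]
      exact Finset.sum_congr rfl fun j _ => Finset.sum_congr rfl fun l _ => by ring
    rw [this, integral_finset_sum _ (fun j _ =>
      integrable_finset_sum _ fun l _ => (hGG j l).const_mul _)]
    refine Finset.sum_congr rfl fun j hj => ?_
    rw [integral_finset_sum _ (fun l _ => (hGG j l).const_mul _)]
    rw [Finset.sum_eq_single j]
    · rw [integral_const_mul, Gfun_ortho, if_pos rfl]; ring
    · intro l _ hne
      rw [integral_const_mul, Gfun_ortho, if_neg (fun hh => hne hh.symm), mul_zero]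
    · intro h'; exact absurd hj h'
  have hphif : ∫ q, φ q * f q ∂ν = ∑ j ∈ Finset.range N, (c j)^2 := by
    have : (fun q => φ q * f q) = fun q => ∑ j ∈ Finset.range N,
        c j * (φ q * Gfun β Vcos j q) := by
      funext q
      rw [hf]
      simp only
      rw [Finset.mul_sum]
      exact Finset.sum_congr rfl fun j _ => by ring
    rw [this, integral_finset_sum _ (fun j _ => (hphiG j).const_mul _)]
    refine Finset.sum_congr rfl fun j hj => ?_
    rw [integral_const_mul]
    have : ∫ (a : ℝ), φ a * Gfun β Vcos j a ∂nuMeas β Vcos = c j := rfl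
    rw [this, sq]
  have hkey : 0 ≤ ∫ q, (φ q - f q)^2 ∂ν := integral_nonneg fun q => sq_nonneg _
  have hexpand : ∫ q, (φ q - f q)^2 ∂ν
      = ∫ q, (φ q)^2 ∂ν - 2 * ∫ q, φ q * f q ∂ν + ∫ q, (f q)^2 ∂ν := by
    have h1 : (fun q => (φ q - f q)^2)
        = fun q => ((φ q)^2 - 2 * (φ q * f q)) + (f q)^2 := by
      funext q; ring
    have hsub : Integrable (fun q => (φ q)^2 - 2 * (φ q * f q)) ν :=
      (hφ.integrable_sq).sub (hint_phif.const_mul 2)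
    have h2 : Integrable (fun q => 2 * (φ q * f q)) ν := hint_phif.const_mul 2
    rw [h1, integral_add hsub hint_f2, integral_sub hφ.integrable_sq h2,
      integral_const_mul]
  rw [hexpand, hf2, hphif] at hkey
  linarith

lemma hasDerivAt_tfun (j : ℕ) (q : ℝ) : HasDerivAt (tfun j) (dfun j q) q := by
  unfold tfun dfun
  split
  · have h1 : HasDerivAt (fun y : ℝ => (tk j : ℝ) * y) ((tk j : ℝ)) q := by
      simpa using (hasDerivAt_id q).const_mul (tk j : ℝ)
    have := h1.cos
    convert this using 1
    ring
  · have h1 : HasDerivAt (fun y : ℝ => (tk j : ℝ) * y) ((tk j : ℝ)) q := by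
      simpa using (hasDerivAt_id q).const_mul (tk j : ℝ)
    have := h1.sin
    convert this using 1
    ring

lemma hasDerivAt_efun (β : ℝ) (q : ℝ) :
    HasDerivAt (fun q => Real.exp (β * Vcos q / 2))
      (β / 2 * Real.sin q * Real.exp (β * Vcos q / 2)) q := by
  have hc : HasDerivAt Vcos (Real.sin q) q := by
    unfold Vcos
    simpa using (Real.hasDerivAt_cos q).const_sub 1
  have h1 : HasDerivAt (fun q : ℝ => β * Vcos q / 2) (β * Real.sin q / 2) q :=
    (hc.const_mul β).div_const 2
  have := h1.exp
  convert this using 1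
  ring

lemma hasDerivAt_Gfun (β : ℝ) (j : ℕ) (q : ℝ) :
    HasDerivAt (Gfun β Vcos j)
      (Afac β j * (dfun j q + β / 2 * Real.sin q * tfun j q)
        * Real.exp (β * Vcos q / 2)) q := by
  have hG : Gfun β Vcos j = fun q => Afac β j * (tfun j q * Real.exp (β * Vcos q / 2)) := by
    funext q; rw [Gfun_eq]; ring
  rw [hG]
  have := ((hasDerivAt_tfun j q).fun_mul (hasDerivAt_efun β q)).const_mul (Afac β j)
  exact this.congr_deriv (by ring)

lemma hasDerivAt_projq (β : ℝ) (K : ℕ) (φ : ℝ → ℝ) (q : ℝ) :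
    HasDerivAt (projq β Vcos K φ)
      (∑ j ∈ Finset.range (2*K - 1),
        (∫ q', φ q' * Gfun β Vcos j q' ∂(nuMeas β Vcos))
          * (Afac β j * (dfun j q + β / 2 * Real.sin q * tfun j q)
            * Real.exp (β * Vcos q / 2))) q := by
  unfold projq
  exact HasDerivAt.fun_sum fun j _ => (hasDerivAt_Gfun β j q).const_mul _

lemma core_bound (β : ℝ) (hβ : 0 < β) (K : ℕ) (hK : 1 ≤ K) (u : ℕ → ℝ) (S D : ℝ → ℝ)
    (hS : S = fun x => ∑ j ∈ Finset.range (2*K-1), u j * tfun j x)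
    (hD : D = fun x => ∑ j ∈ Finset.range (2*K-1), u j * dfun j x) :
    ∫ x in (0:ℝ)..(2*π), (D x + β/2 * Real.sin x * S x)^2
      ≤ ((K:ℝ) - 1 + β/2)^2 *
        ∑ j ∈ Finset.range (2*K-1), (u j)^2 * (if j = 0 then 2*π else π) := by
  have hπ := Real.pi_pos
  have h2π : (0:ℝ) ≤ 2*π := by positivity
  have hQeq : ∫ x in (0:ℝ)..(2*π), (S x)^2
      = ∑ j ∈ Finset.range (2*K-1), (u j)^2 * (if j = 0 then 2*π else π) := by
    rw [hS]; exact int_sum_sq _ u tfun _ cont_tfun int_tt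
  have hD2eq : ∫ x in (0:ℝ)..(2*π), (D x)^2
      = ∑ j ∈ Finset.range (2*K-1), (u j)^2 * (((tk j : ℝ))^2 * π) := by
    rw [hD]; exact int_sum_sq _ u dfun _ cont_dfun int_dd
  have hSc : Continuous S := by
    rw [hS]; exact continuous_finset_sum _ fun j _ => continuous_const.mul (cont_tfun j)
  have hDc : Continuous D := by
    rw [hD]; exact continuous_finset_sum _ fun j _ => continuous_const.mul (cont_dfun j)
  have hQnn : 0 ≤ ∫ x in (0:ℝ)..(2*π), (S x)^2 :=
    intervalIntegral.integral_nonneg h2π fun x _ => sq_nonneg _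
  have hK1 : (1:ℝ) ≤ (K:ℝ) := by exact_mod_cast hK
  have hD2le : ∫ x in (0:ℝ)..(2*π), (D x)^2
      ≤ ((K:ℝ)-1)^2 * ∫ x in (0:ℝ)..(2*π), (S x)^2 := by
    rw [hQeq, hD2eq, Finset.mul_sum]
    refine Finset.sum_le_sum fun j hj => ?_
    have hjN : j < 2*K-1 := Finset.mem_range.mp hj
    have htkn : tk j ≤ K - 1 := by
      unfold tk; split <;> omega
    have htk : (tk j : ℝ) ≤ (K:ℝ) - 1 := by
      have h1 : ((tk j : ℕ) : ℝ) ≤ ((K - 1 : ℕ) : ℝ) := Nat.cast_le.mpr htkn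
      rwa [Nat.cast_sub hK, Nat.cast_one] at h1
    have h0 : (0:ℝ) ≤ (tk j : ℝ) := Nat.cast_nonneg _
    have h3 : ((tk j : ℝ))^2 ≤ ((K:ℝ)-1)^2 := by nlinarith
    have h2 : π ≤ (if j = 0 then 2*π else π) := by split <;> linarith
    have e1 : u j^2 * (((tk j : ℝ))^2 * π) ≤ u j^2 * (((K:ℝ)-1)^2 * π) :=
      mul_le_mul_of_nonneg_left (by nlinarith) (sq_nonneg _)
    have e2 : ((K:ℝ)-1)^2 * (u j^2 * π)
        ≤ ((K:ℝ)-1)^2 * (u j^2 * (if j = 0 then 2*π else π)) :=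
      mul_le_mul_of_nonneg_left (mul_le_mul_of_nonneg_left h2 (sq_nonneg _)) (sq_nonneg _)
    nlinarith [e1, e2]
  have hsin2 : ∫ x in (0:ℝ)..(2*π), (Real.sin x * S x)^2
      ≤ ∫ x in (0:ℝ)..(2*π), (S x)^2 := by
    refine intervalIntegral.integral_mono_on h2π
      (((Real.continuous_sin.mul hSc).pow 2).intervalIntegrable _ _)
      ((hSc.pow 2).intervalIntegrable _ _) fun x _ => ?_
    nlinarith [Real.sin_sq_le_one x, sq_nonneg (S x)]
  have hcross : ∫ x in (0:ℝ)..(2*π), D x * S x * Real.sin x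
      ≤ ((K:ℝ)-1) * ∫ x in (0:ℝ)..(2*π), (S x)^2 := by
    rcases eq_or_lt_of_le hK with hKe | hK2
    · have hD0 : D = fun _ => (0:ℝ) := by
        rw [hD, ← hKe]
        funext x
        simp [dfun, tk]
      rw [hD0]
      simp only [zero_mul, intervalIntegral.integral_zero]
      have : (K:ℝ) - 1 = 0 := by rw [← hKe]; norm_num
      rw [this, zero_mul]
    · have hK2' : (2:ℝ) ≤ (K:ℝ) := by exact_mod_cast hK2
      have hSd : ∀ x : ℝ, HasDerivAt S (D x) x := by
        intro x
        rw [hS, hD]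
        exact HasDerivAt.fun_sum fun j _ => (hasDerivAt_tfun j x).const_mul (u j)
      have hFTC : ∫ x in (0:ℝ)..(2*π),
          (D x * S x * Real.sin x + (S x)^2 * Real.cos x / 2)
          = S (2*π) * S (2*π) * Real.sin (2*π) / 2 - S 0 * S 0 * Real.sin 0 / 2 := by
        refine intervalIntegral.integral_eq_sub_of_hasDerivAt
          (f := fun x => S x * S x * Real.sin x / 2) (fun x _ => ?_) ?_
        · have h := (((hSd x).fun_mul (hSd x)).fun_mul (Real.hasDerivAt_sin x)).div_const 2
          exact h.congr_deriv (by ring)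
        · exact (((hDc.mul hSc).mul Real.continuous_sin).add
            (((hSc.pow 2).mul Real.continuous_cos).div_const 2)).intervalIntegrable _ _
      rw [Real.sin_two_pi, Real.sin_zero] at hFTC
      have hint1 : IntervalIntegrable (fun x => D x * S x * Real.sin x) volume 0 (2*π) :=
        ((hDc.mul hSc).mul Real.continuous_sin).intervalIntegrable _ _
      have hint2 : IntervalIntegrable (fun x => (S x)^2 * Real.cos x / 2) volume 0 (2*π) :=
        (((hSc.pow 2).mul Real.continuous_cos).div_const 2).intervalIntegrable _ _
      rw [intervalIntegral.integral_add hint1 hint2] at hFTC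
      have hb : -(∫ x in (0:ℝ)..(2*π), (S x)^2)
          ≤ ∫ x in (0:ℝ)..(2*π), (S x)^2 * Real.cos x := by
        rw [← intervalIntegral.integral_neg]
        refine intervalIntegral.integral_mono_on h2π
          ((hSc.pow 2).neg.intervalIntegrable _ _)
          (((hSc.pow 2).mul Real.continuous_cos).intervalIntegrable _ _) fun x _ => ?_
        nlinarith [Real.neg_one_le_cos x, sq_nonneg (S x)]
      have hdiv : ∫ x in (0:ℝ)..(2*π), (S x)^2 * Real.cos x / 2
          = (∫ x in (0:ℝ)..(2*π), (S x)^2 * Real.cos x) / 2 :=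
        intervalIntegral.integral_div _ _
      rw [hdiv] at hFTC
      have hQ := hQnn
      nlinarith
  have hexp : ∫ x in (0:ℝ)..(2*π), (D x + β/2 * Real.sin x * S x)^2
      = (∫ x in (0:ℝ)..(2*π), (D x)^2)
        + β * (∫ x in (0:ℝ)..(2*π), D x * S x * Real.sin x)
        + (β/2)^2 * ∫ x in (0:ℝ)..(2*π), (Real.sin x * S x)^2 := by
    have h1 : (fun x => (D x + β/2 * Real.sin x * S x)^2)
        = fun x => ((D x)^2 + β * (D x * S x * Real.sin x))
          + (β/2)^2 * (Real.sin x * S x)^2 := funext fun x => by ring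
    rw [h1, intervalIntegral.integral_add
        (f := fun x => (D x)^2 + β * (D x * S x * Real.sin x))
        (g := fun x => (β/2)^2 * (Real.sin x * S x)^2)
        (((hDc.pow 2).add ((continuous_const.mul ((hDc.mul hSc).mul
          Real.continuous_sin)))).intervalIntegrable _ _)
        ((continuous_const.mul ((Real.continuous_sin.mul hSc).pow 2)).intervalIntegrable _ _),
      intervalIntegral.integral_add (f := fun x => (D x)^2)
        (g := fun x => β * (D x * S x * Real.sin x)) ((hDc.pow 2).intervalIntegrable _ _)
        ((continuous_const.mul ((hDc.mul hSc).mul Real.continuous_sin)).intervalIntegrable _ _),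
      intervalIntegral.integral_const_mul, intervalIntegral.integral_const_mul]
  rw [hexp, ← hQeq]
  have hβ2 : (0:ℝ) ≤ β := hβ.le
  nlinarith [mul_le_mul_of_nonneg_left hcross hβ2, hQnn,
    mul_le_mul_of_nonneg_left hsin2 (sq_nonneg (β/2))]

/-- Operator-norm growth of the projected derivative: for `V(q) = 1 - cos q`, `K ≥ 1` and
`φ ∈ L²(ν)`, `‖(Π_K^q φ)'‖_{L²(ν)} ≤ (K - 1 + β/2)‖φ‖_{L²(ν)}`. -/
theorem projected_derivative_operator_norm (β : ℝ) (hβ : 0 < β)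
    (K : ℕ) (hK : 1 ≤ K) (φ : ℝ → ℝ)
    (hφ : MeasureTheory.MemLp φ 2 (nuMeas β Vcos)) :
    Real.sqrt (∫ q, (deriv (projq β Vcos K φ) q)^2 ∂(nuMeas β Vcos))
      ≤ ((K:ℝ) - 1 + β/2) * Real.sqrt (∫ q, (φ q)^2 ∂(nuMeas β Vcos)) := by
  have hπ := Real.pi_pos
  have hZ := Znu_pos β
  set c : ℕ → ℝ := fun j => ∫ q, φ q * Gfun β Vcos j q ∂(nuMeas β Vcos) with hc
  set u : ℕ → ℝ := fun j => c j * Afac β j with hu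
  have hC0 : (0:ℝ) ≤ (K:ℝ) - 1 + β/2 := by
    have h1 : (1:ℝ) ≤ (K:ℝ) := by exact_mod_cast hK
    linarith
  -- derivative formula
  have hderiv : deriv (projq β Vcos K φ) = fun q =>
      ((∑ j ∈ Finset.range (2*K-1), u j * dfun j q)
        + β/2 * Real.sin q * (∑ j ∈ Finset.range (2*K-1), u j * tfun j q))
        * Real.exp (β * Vcos q / 2) := by
    funext q
    rw [(hasDerivAt_projq β K φ q).deriv]
    rw [add_mul, Finset.sum_mul, Finset.mul_sum, Finset.sum_mul, ← Finset.sum_add_distrib]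
    refine Finset.sum_congr rfl fun j _ => ?_
    simp only [hu, hc]
    ring
  -- pass to interval integral
  have hpt : ∀ (a q : ℝ), (a * Real.exp (β * Vcos q / 2))^2 * Real.exp (-(β * Vcos q))
      = a^2 := by
    intro a q
    have h : Real.exp (β * Vcos q / 2) ^ 2 * Real.exp (-(β * Vcos q)) = 1 := by
      rw [sq, ← Real.exp_add, ← Real.exp_add, ← Real.exp_zero]
      norm_num
    linear_combination a^2 * h
  have hX : ∫ q, (deriv (projq β Vcos K φ) q)^2 ∂(nuMeas β Vcos)
      = (Znu β Vcos)⁻¹ * ∫ x in (0:ℝ)..(2*π),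
          ((∑ j ∈ Finset.range (2*K-1), u j * dfun j x)
            + β/2 * Real.sin x * (∑ j ∈ Finset.range (2*K-1), u j * tfun j x))^2 := by
    rw [integral_nu β]
    congr 1
    refine intervalIntegral.integral_congr fun q _ => ?_
    rw [hderiv]
    exact hpt _ q
  -- core bound
  have hcore := core_bound β hβ K hK u _ _ rfl rfl
  -- sum identity
  have hsum : ∑ j ∈ Finset.range (2*K-1), (u j)^2 * (if j = 0 then 2*π else π)
      = Znu β Vcos * ∑ j ∈ Finset.range (2*K-1), (c j)^2 := by
    rw [Finset.mul_sum]
    refine Finset.sum_congr rfl fun j _ => ?_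
    have hA : (Afac β j)^2 * (if j = 0 then 2*π else π) = Znu β Vcos := by
      unfold Afac
      split <;> rw [Real.sq_sqrt (by positivity)] <;> field_simp
    calc (u j)^2 * (if j = 0 then 2*π else π)
        = (c j)^2 * ((Afac β j)^2 * (if j = 0 then 2*π else π)) := by rw [hu]; ring
      _ = Znu β Vcos * (c j)^2 := by rw [hA]; ring
  -- Bessel
  have hbessel := bessel β hβ (2*K-1) hφ
  have hY : 0 ≤ ∫ q, (φ q)^2 ∂(nuMeas β Vcos) := integral_nonneg fun q => sq_nonneg _
  -- combine
  have hXle : ∫ q, (deriv (projq β Vcos K φ) q)^2 ∂(nuMeas β Vcos)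
      ≤ ((K:ℝ) - 1 + β/2)^2 * ∫ q, (φ q)^2 ∂(nuMeas β Vcos) := by
    rw [hX]
    calc (Znu β Vcos)⁻¹ * ∫ x in (0:ℝ)..(2*π),
          ((∑ j ∈ Finset.range (2*K-1), u j * dfun j x)
            + β/2 * Real.sin x * (∑ j ∈ Finset.range (2*K-1), u j * tfun j x))^2
        ≤ (Znu β Vcos)⁻¹ * (((K:ℝ) - 1 + β/2)^2 *
            ∑ j ∈ Finset.range (2*K-1), (u j)^2 * (if j = 0 then 2*π else π)) :=
          mul_le_mul_of_nonneg_left hcore (inv_nonneg.mpr hZ.le)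
      _ = ((K:ℝ) - 1 + β/2)^2 * ∑ j ∈ Finset.range (2*K-1), (c j)^2 := by
          rw [hsum]
          field_simp
      _ ≤ ((K:ℝ) - 1 + β/2)^2 * ∫ q, (φ q)^2 ∂(nuMeas β Vcos) :=
          mul_le_mul_of_nonneg_left hbessel (sq_nonneg _)
  calc Real.sqrt (∫ q, (deriv (projq β Vcos K φ) q)^2 ∂(nuMeas β Vcos))
      ≤ Real.sqrt (((K:ℝ) - 1 + β/2)^2 * ∫ q, (φ q)^2 ∂(nuMeas β Vcos)) :=
        Real.sqrt_le_sqrt hXle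
    _ = ((K:ℝ) - 1 + β/2) * Real.sqrt (∫ q, (φ q)^2 ∂(nuMeas β Vcos)) := by
        rw [Real.sqrt_mul (sq_nonneg _), Real.sqrt_sq hC0]
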